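/- arXiv:1405.3051 — 5 statements merged into one kernel-verified Lean document; each statement's English description precedes it below -/
import Mathlib

section
/- Let (W,S) be a Coxeter system with length function ℓ. For all g, h ∈ W, ℓ(gh) = ℓ(g) + ℓ(h) − 2·N, where N is the number of reflections t ∈ W such that t is a right inversion of g and a left inversion of h. -/
/-!
Following Bourbaki, each simple reflection `s` acts on `W × ZMod 2` by
`(t, ε) ↦ (s t s, ε + [t = s])`; these involutions satisfy the Coxeter relations, so they
define an action of `W` of the form `(t, ε) ↦ (w t w⁻¹, ε + η(w, t))` with a cocycle
`η(g h, t) = η(g, h t h⁻¹) + η(h, t)`. Comparing with inversion sequences of reduced words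
shows that `η(w, t) = 1` exactly when `t` is a right inversion of `w`, so the set `N(w)` of
right inversions has `ℓ(w)` elements and `N(g h) = h⁻¹ N(g) h ∆ N(h)`. The intersection
`h⁻¹ N(g) h ∩ N(h)` is the conjugate by `h⁻¹` of the set of right inversions of `g` that are
left inversions of `h`, and `|A ∆ B| = |A| + |B| - 2 |A ∩ B|` gives the formula.
-/

open scoped symmDiff

theorem Set.ncard_symmDiff_add_two_mul_ncard_inter {α : Type*} {s t : Set α} (hs : s.Finite)
    (ht : t.Finite) : (s ∆ t).ncard + 2 * (s ∩ t).ncard = s.ncard + t.ncard := by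
  have hunion : s ∪ t = s ∆ t ∪ s ∩ t := (symmDiff_sup_inf s t).symm
  have hdisj : Disjoint (s ∆ t) (s ∩ t) := disjoint_symmDiff_inf s t
  rw [← Set.ncard_union_add_ncard_inter s t hs ht, hunion,
    Set.ncard_union_eq hdisj ((hs.union ht).subset symmDiff_le_sup) (hs.inter_of_left t)]
  ring

theorem ZMod.add_eq_one_iff (a b : ZMod 2) : a + b = 1 ↔ a = 1 ∧ b ≠ 1 ∨ b = 1 ∧ a ≠ 1 := by
  revert a b; decide

theorem mul_mul_inv_eq_iff_eq_inv_mul_mul {G : Type*} [Group G] {a t b : G} :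
    a * t * a⁻¹ = b ↔ t = a⁻¹ * b * a := by
  rw [← MulAut.conj_apply, ← MulEquiv.eq_symm_apply, MulAut.conj_symm_apply]

namespace CoxeterSystem

open scoped Classical

variable {B W : Type*} [Group W] {M : CoxeterMatrix B} (cs : CoxeterSystem M W)

local prefix:100 "s" => cs.simple
local prefix:100 "ℓ" => cs.length
local prefix:100 "π" => cs.wordProd
local prefix:100 "ris" => cs.rightInvSeq

noncomputable def reflectionPerm (i : B) : Equiv.Perm (W × ZMod 2) :=
  Function.Involutive.toPerm (fun x ↦ (s i * x.1 * s i, x.2 + if x.1 = s i then 1 else 0)) <| by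
    rintro ⟨t, ε⟩
    have hconj : s i * (s i * t * s i) * s i = t := by
      simp only [mul_assoc, simple_mul_simple_cancel_left, simple_mul_simple_self, mul_one]
    have hfix : s i * t * s i = s i ↔ t = s i := by
      rw [mul_eq_right, mul_eq_one_iff_inv_eq, inv_simple, eq_comm]
    simp only [hconj, hfix, add_assoc, CharTwo.add_self_eq_zero, add_zero]

theorem reflectionPerm_apply (i : B) (t : W) (ε : ZMod 2) :
    cs.reflectionPerm i (t, ε) = (s i * t * s i, ε + if t = s i then 1 else 0) := rfl

theorem simple_mul_pow (i j : B) (k : ℕ) :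
    s j * (s i * s j) ^ k = (s i * s j)⁻¹ ^ k * s j := by
  have h : s j * (s i * s j) * (s j)⁻¹ = (s i * s j)⁻¹ := by
    simp [mul_assoc]
  rw [← h, conj_pow, inv_simple, mul_assoc, simple_mul_simple_self, mul_one]

theorem pow_mul_mul_inv_pow_eq_iff (i j : B) (k r : ℕ) (t : W) :
    (s i * s j) ^ k * t * ((s i * s j) ^ k)⁻¹ = (s i * s j)⁻¹ ^ r * s j ↔
      t = (s i * s j)⁻¹ ^ (2 * k + r) * s j := by
  have hsp := cs.simple_mul_pow i j k
  generalize s i * s j = p at hsp ⊢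
  have key : (p ^ k)⁻¹ * (p⁻¹ ^ r * s j) * p ^ k = p⁻¹ ^ (2 * k + r) * s j :=
    calc _ = p⁻¹ ^ k * p⁻¹ ^ r * (s j * p ^ k) := by group
      _ = _ := by rw [hsp]; group
  rw [mul_mul_inv_eq_iff_eq_inv_mul_mul, key]

theorem reflectionPerm_mul_apply (i j : B) (t : W) (ε : ZMod 2) :
    (cs.reflectionPerm i * cs.reflectionPerm j) (t, ε) =
      (s i * s j * t * (s i * s j)⁻¹,
        ε + (if t = s j then 1 else 0) + if t = (s i * s j)⁻¹ * s j then 1 else 0) := by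
  have hfix : s j * t * s j = s i ↔ t = (s i * s j)⁻¹ * s j := by
    simpa using mul_mul_inv_eq_iff_eq_inv_mul_mul (a := s j) (t := t) (b := s i)
  rw [Equiv.Perm.mul_apply, reflectionPerm_apply, reflectionPerm_apply, hfix]
  simp [mul_assoc]

theorem reflectionPerm_mul_pow_apply (i j : B) (k : ℕ) (t : W) (ε : ZMod 2) :
    ((cs.reflectionPerm i * cs.reflectionPerm j) ^ k) (t, ε) =
      ((s i * s j) ^ k * t * ((s i * s j) ^ k)⁻¹,
        ε + ∑ r ∈ Finset.range (2 * k), if t = (s i * s j)⁻¹ ^ r * s j then 1 else 0) := by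
  induction k generalizing t ε with
  | zero => simp
  | succ k ih =>
    have h0 := pow_mul_mul_inv_pow_eq_iff cs i j k 0 t
    have h1 := pow_mul_mul_inv_pow_eq_iff cs i j k 1 t
    rw [pow_zero, one_mul, add_zero] at h0
    rw [pow_one] at h1
    rw [pow_succ', Equiv.Perm.mul_apply, ih, reflectionPerm_mul_apply, h0, h1, Nat.mul_succ,
      Finset.sum_range_succ, Finset.sum_range_succ]
    refine Prod.ext ?_ ?_
    · simp only [pow_succ', mul_inv_rev]
      group
    · simp only [add_assoc]

theorem isLiftable_reflectionPerm : M.IsLiftable cs.reflectionPerm := by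
  intro i j
  have hp : (s i * s j) ^ M i j = 1 := cs.simple_mul_simple_pow i j
  have hperiodic : ∀ r, (s i * s j)⁻¹ ^ (M i j + r) = (s i * s j)⁻¹ ^ r := fun r ↦ by
    rw [pow_add, inv_pow, hp, inv_one, one_mul]
  ext ⟨t, ε⟩ : 1
  -- `r` matters only modulo `M i j`, so every term of the sum over `range (2 * M i j)` occurs twice
  rw [reflectionPerm_mul_pow_apply, two_mul, Finset.sum_range_add]
  simp only [hperiodic, CharTwo.add_self_eq_zero, hp, one_mul, inv_one, mul_one, add_zero,
    Equiv.Perm.coe_one, id_eq]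

noncomputable def reflectionRep : W →* Equiv.Perm (W × ZMod 2) :=
  cs.lift ⟨cs.reflectionPerm, cs.isLiftable_reflectionPerm⟩

theorem reflectionRep_simple (i : B) : cs.reflectionRep (s i) = cs.reflectionPerm i :=
  cs.lift_apply_simple cs.isLiftable_reflectionPerm i

noncomputable def reflectionCocycle (w t : W) : ZMod 2 := (cs.reflectionRep w (t, 0)).2

theorem reflectionRep_apply (w t : W) (ε : ZMod 2) :
    cs.reflectionRep w (t, ε) = (w * t * w⁻¹, ε + cs.reflectionCocycle w t) := by
  induction w using cs.simple_induction_left generalizing t ε with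
  | one => simp [reflectionCocycle]
  | mul_simple_left w i ih =>
    have hstep : ∀ ε', cs.reflectionRep (s i * w) (t, ε') =
        (s i * (w * t * w⁻¹) * s i, ε' + cs.reflectionCocycle w t +
          if w * t * w⁻¹ = s i then 1 else 0) := fun ε' ↦ by
      rw [map_mul, Equiv.Perm.mul_apply, ih, reflectionRep_simple, reflectionPerm_apply]
    have hcocycle : cs.reflectionCocycle (s i * w) t =
        cs.reflectionCocycle w t + if w * t * w⁻¹ = s i then 1 else 0 := by
      show (cs.reflectionRep (s i * w) (t, 0)).2 = _
      rw [hstep, zero_add]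
    rw [hstep, hcocycle, mul_inv_rev, inv_simple]
    simp only [add_assoc, mul_assoc]

theorem reflectionCocycle_mul (x y t : W) :
    cs.reflectionCocycle (x * y) t =
      cs.reflectionCocycle x (y * t * y⁻¹) + cs.reflectionCocycle y t := by
  have h := congrArg Prod.snd (cs.reflectionRep_apply (x * y) t 0)
  rw [map_mul, Equiv.Perm.mul_apply, reflectionRep_apply, reflectionRep_apply] at h
  simpa [add_comm] using h.symm

@[simp]
theorem reflectionCocycle_one (t : W) : cs.reflectionCocycle 1 t = 0 := by
  simp [reflectionCocycle]

theorem reflectionCocycle_simple (i : B) (t : W) :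
    cs.reflectionCocycle (s i) t = if t = s i then 1 else 0 := by
  simp [reflectionCocycle, reflectionRep_simple, reflectionPerm_apply]

theorem reflectionCocycle_mul_simple (w : W) (i : B) (t : W) :
    cs.reflectionCocycle (w * s i) t =
      cs.reflectionCocycle w (s i * t * s i) + if t = s i then 1 else 0 := by
  rw [reflectionCocycle_mul, reflectionCocycle_simple, inv_simple]

theorem reflectionCocycle_inv (w t : W) :
    cs.reflectionCocycle w⁻¹ t = cs.reflectionCocycle w (w⁻¹ * t * w) := by
  have h := cs.reflectionCocycle_mul w w⁻¹ t
  rwa [mul_inv_cancel, reflectionCocycle_one, inv_inv, eq_comm, CharTwo.add_eq_zero, eq_comm] at h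

theorem IsReflection.reflectionCocycle_self {t : W} (ht : cs.IsReflection t) :
    cs.reflectionCocycle t t = 1 := by
  obtain ⟨u, i, rfl⟩ := ht
  have hconj : u⁻¹ * (u * s i * u⁻¹) * u = s i := by group
  rw [reflectionCocycle_mul, inv_inv, hconj, reflectionCocycle_mul_simple, reflectionCocycle_inv,
    hconj, simple_mul_simple_self, one_mul, if_pos rfl, add_right_comm, CharTwo.add_self_eq_zero,
    zero_add]

theorem mem_rightInvSeq_of_reflectionCocycle_eq_one (ω : List B) {t : W}
    (ht : cs.reflectionCocycle (π ω) t = 1) : t ∈ ris ω := by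
  induction ω using List.reverseRecOn generalizing t with
  | nil => simp at ht
  | append_singleton ω i ih =>
    rw [← List.concat_eq_append] at ht ⊢
    rw [wordProd_concat, reflectionCocycle_mul_simple] at ht
    rw [rightInvSeq_concat, List.concat_eq_append, List.mem_append, List.mem_singleton,
      List.mem_map]
    by_cases hti : t = s i
    · exact Or.inr hti
    · rw [if_neg hti, add_zero] at ht
      exact Or.inl ⟨_, ih ht, by simp [mul_assoc]⟩

theorem isRightInversion_of_reflectionCocycle_eq_one {w t : W}
    (ht : cs.reflectionCocycle w t = 1) : cs.IsRightInversion w t := by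
  obtain ⟨ω, hω, rfl⟩ := cs.exists_isReduced w
  exact cs.isRightInversion_of_mem_rightInvSeq hω
    (cs.mem_rightInvSeq_of_reflectionCocycle_eq_one ω ht)

theorem isRightInversion_iff_reflectionCocycle_eq_one {w t : W} :
    cs.IsRightInversion w t ↔ cs.reflectionCocycle w t = 1 := by
  refine ⟨fun ht ↦ ?_, cs.isRightInversion_of_reflectionCocycle_eq_one⟩
  by_contra hne
  -- otherwise `t` would also be a right inversion of `w * t`, and `ℓ w < ℓ (w * t)`
  have hwt : cs.reflectionCocycle (w * t) t = 1 := by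
    rw [reflectionCocycle_mul, mul_inv_cancel_right, ht.1.reflectionCocycle_self]
    exact (ZMod.add_eq_one_iff _ _).2 (Or.inr ⟨rfl, hne⟩)
  have hlt := (cs.isRightInversion_of_reflectionCocycle_eq_one hwt).2
  rw [mul_assoc, ht.1.mul_self, mul_one] at hlt
  exact lt_asymm hlt ht.2

theorem setOf_isRightInversion_eq_toFinset_rightInvSeq {ω : List B} (hω : cs.IsReduced ω) :
    {t | cs.IsRightInversion (π ω) t} = ↑(ris ω).toFinset := by
  ext t
  rw [Set.mem_ofPred_eq, Finset.mem_coe, List.mem_toFinset]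
  exact ⟨fun ht ↦ cs.mem_rightInvSeq_of_reflectionCocycle_eq_one ω
      (cs.isRightInversion_iff_reflectionCocycle_eq_one.1 ht),
    cs.isRightInversion_of_mem_rightInvSeq hω⟩

theorem finite_setOf_isRightInversion (w : W) : {t | cs.IsRightInversion w t}.Finite := by
  obtain ⟨ω, hω, rfl⟩ := cs.exists_isReduced w
  rw [cs.setOf_isRightInversion_eq_toFinset_rightInvSeq hω]
  exact Finset.finite_toSet _

theorem ncard_setOf_isRightInversion (w : W) : {t | cs.IsRightInversion w t}.ncard = ℓ w := by
  obtain ⟨ω, hω, rfl⟩ := cs.exists_isReduced w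
  rw [cs.setOf_isRightInversion_eq_toFinset_rightInvSeq hω, Set.ncard_coe_finset,
    List.toFinset_card_of_nodup hω.nodup_rightInvSeq, length_rightInvSeq, hω.eq]

theorem setOf_isRightInversion_mul (g h : W) :
    {t | cs.IsRightInversion (g * h) t} =
      (MulAut.conj h ⁻¹' {t | cs.IsRightInversion g t}) ∆ {t | cs.IsRightInversion h t} := by
  ext t
  simp only [Set.mem_symmDiff, Set.mem_preimage, Set.mem_ofPred_eq, MulAut.conj_apply,
    isRightInversion_iff_reflectionCocycle_eq_one, reflectionCocycle_mul, ZMod.add_eq_one_iff]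

theorem isLeftInversion_conj_iff (w t : W) :
    cs.IsLeftInversion w (w * t * w⁻¹) ↔ cs.IsRightInversion w t := by
  rw [IsLeftInversion, IsRightInversion, isReflection_conj_iff, inv_mul_cancel_right]

end CoxeterSystem

/-- **Hart–Rowley, Lemma 2.2.** For elements `g, h` of a Coxeter group,
`ℓ(g h) = ℓ(g) + ℓ(h) − 2 N`, where `N` is the number of reflections that are
simultaneously a right inversion of `g` and a left inversion of `h`
(stated additively to avoid natural-number subtraction). -/
theorem length_mul_eq_add_sub_two_mul_card_inversions {B W : Type*} [Group W]
    {M : CoxeterMatrix B} (cs : CoxeterSystem M W) (g h : W) :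
    cs.length g + cs.length h =
      cs.length (g * h) +
        2 * {t : W | cs.IsRightInversion g t ∧ cs.IsLeftInversion h t}.ncard := by
  have ncard_preimage_conj (s : Set W) : (MulAut.conj h ⁻¹' s).ncard = s.ncard :=
    Set.ncard_preimage_of_injective_subset_range (MulAut.conj h).injective
      (by simp [(MulAut.conj h).surjective.range_eq])
  have hinter :
      (MulAut.conj h ⁻¹' {t | cs.IsRightInversion g t}) ∩ {t | cs.IsRightInversion h t} =
        MulAut.conj h ⁻¹' {t | cs.IsRightInversion g t ∧ cs.IsLeftInversion h t} := by
    ext t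
    simp [cs.isLeftInversion_conj_iff]
  have key := Set.ncard_symmDiff_add_two_mul_ncard_inter
    ((cs.finite_setOf_isRightInversion g).preimage (MulAut.conj h).injective.injOn)
    (cs.finite_setOf_isRightInversion h)
  rwa [← cs.setOf_isRightInversion_mul, hinter, ncard_preimage_conj, ncard_preimage_conj,
    cs.ncard_setOf_isRightInversion, cs.ncard_setOf_isRightInversion,
    cs.ncard_setOf_isRightInversion, eq_comm] at key
end

section
/- Let n ≥ 2, let w = (1 2 ⋯ n) ∈ Sym(n), and let y_k (0 ≤ k ≤ n−1) be as below. Then ℓ(w y_k) + ℓ(y_k) − ℓ(w) = 2k² − 2k(n−1) + n² − 3n + 2, where ℓ denotes the inversion number. -/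
/-- The inversion number of a permutation of `{0, …, n−1}`, which equals the Coxeter
length of the permutation in `W(A_{n−1}) ≅ Sym(n)`. -/
def invNum {n : ℕ} (σ : Equiv.Perm (Fin n)) : ℕ :=
  (Finset.univ.filter fun p : Fin n × Fin n => p.1 < p.2 ∧ σ p.2 < σ p.1).card

/-- The underlying function of `y_k`: `j ↦ k - 1 - j` for `j < k` and
`j ↦ n + k - 1 - j` for `k ≤ j < n` (the zero-indexed form of the permutation of
`{1, …, n}` sending `i ↦ k + 1 - i` for `1 ≤ i ≤ k` and `i ↦ n + k + 1 - i` for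
`k + 1 ≤ i ≤ n`). -/
def ykFun (n k : ℕ) (hk : k ≤ n) (j : Fin n) : Fin n :=
  if _h : (j : ℕ) < k then ⟨k - 1 - j, by omega⟩ else ⟨n + k - 1 - j, by omega⟩

lemma ykFun_involutive (n k : ℕ) (hk : k ≤ n) : Function.Involutive (ykFun n k hk) := by
  intro j
  unfold ykFun
  by_cases h1 : (j : ℕ) < k
  · rw [dif_pos h1, dif_pos (by simp; omega)]
    apply Fin.ext; simp; omega
  · rw [dif_neg h1, dif_neg (by simp; omega)]
    apply Fin.ext; simp; omega

/-- The involution `y_k` of Hart–Rowley, Proposition 2.8. -/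
def yk (n k : ℕ) (hk : k ≤ n) : Equiv.Perm (Fin n) := (ykFun_involutive n k hk).toPerm

/-!
The permutation `y_k` reverses each of the blocks `[0, k)` and `[k, n)` in place, so its
inversions are exactly the pairs lying in a common block and `ℓ(y_k) = C(k,2) + C(n-k,2)`.
Composing with the rotation gives `w y_k = y_{k+1}`, and the inversions of `w` are the `n - 1`
pairs ending at the last position. Writing `n = k + m + 1`, the left-hand side becomes
`(C(k,2) + C(k+1,2)) + (C(m,2) + C(m+1,2)) - (k + m) = k² + m² - k - m`.
-/

open Finset

theorem Finset.card_filter_lt_and_iff {α : Type*} [Fintype α] [LinearOrder α]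
    (p : α → Prop) [DecidablePred p] :
    #{x : α × α | x.1 < x.2 ∧ (p x.1 ↔ p x.2)} =
      (#{a | p a}).choose 2 + (Fintype.card α - #{a | p a}).choose 2 := by
  set s : Finset α := {a | p a}
  have hsplit : ({x : α × α | x.1 < x.2 ∧ (p x.1 ↔ p x.2)} : Finset (α × α)) =
      {x ∈ s ×ˢ s | x.1 < x.2} ∪ {x ∈ sᶜ ×ˢ sᶜ | x.1 < x.2} := by
    ext x
    simp only [s, mem_filter, mem_univ, true_and, mem_union, mem_product, mem_compl]
    tauto
  have hdisj : Disjoint {x ∈ s ×ˢ s | x.1 < x.2} {x ∈ sᶜ ×ˢ sᶜ | x.1 < x.2} :=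
    disjoint_filter_filter (disjoint_product.2 (Or.inl disjoint_compl_right))
  rw [hsplit, card_union_of_disjoint hdisj, card_product_filter_lt, card_product_filter_lt,
    card_compl]

theorem invNum_eq_card_of_forall_lt_iff {n : ℕ} (σ : Equiv.Perm (Fin n))
    (P : Fin n → Fin n → Prop) [DecidableRel P] (h : ∀ a b, a < b → (σ b < σ a ↔ P a b)) :
    invNum σ = #{x : Fin n × Fin n | x.1 < x.2 ∧ P x.1 x.2} := by
  unfold invNum
  congr 1
  exact filter_congr fun x _ => and_congr_right (h x.1 x.2)

theorem invNum_finRotate_succ (m : ℕ) : invNum (finRotate (m + 1)) = m := by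
  have hinv : ∀ a b : Fin (m + 1), a < b → (finRotate (m + 1) b < finRotate (m + 1) a ↔
      b = Fin.last m) := by
    intro a b hab
    have ha : a ≠ Fin.last m := (hab.trans_le (Fin.le_last b)).ne
    by_cases hb : b = Fin.last m
    · rw [hb, finRotate_last, Fin.lt_def, coe_finRotate_of_ne_last ha]
      simp
    · rw [Fin.lt_def, coe_finRotate_of_ne_last hb, coe_finRotate_of_ne_last ha]
      simpa [hb] using hab.le
  rw [invNum_eq_card_of_forall_lt_iff _ _ hinv]
  have hset : ({x : Fin (m + 1) × Fin (m + 1) | x.1 < x.2 ∧ x.2 = Fin.last m} : Finset _) =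
      Iio (Fin.last m) ×ˢ {Fin.last m} := by
    ext ⟨a, b⟩
    simp only [mem_filter, mem_univ, true_and, mem_product, mem_Iio, mem_singleton]
    exact ⟨fun ⟨hab, hb⟩ => ⟨hb ▸ hab, hb⟩, fun ⟨ha, hb⟩ => ⟨hb ▸ ha, hb⟩⟩
  rw [hset, card_product, Fin.card_Iio, card_singleton, Fin.val_last, mul_one]

theorem yk_apply_val (n k : ℕ) (hk : k ≤ n) (j : Fin n) :
    (yk n k hk j : ℕ) = if (j : ℕ) < k then k - 1 - j else n + k - 1 - j := by
  simp only [yk, Function.Involutive.coe_toPerm, ykFun]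
  split_ifs <;> rfl

theorem yk_lt_yk_iff (n k : ℕ) (hk : k ≤ n) {a b : Fin n} (hab : a < b) :
    yk n k hk b < yk n k hk a ↔ ((a : ℕ) < k ↔ (b : ℕ) < k) := by
  rw [Fin.lt_def] at hab ⊢
  rw [yk_apply_val, yk_apply_val]
  have := b.isLt
  split_ifs <;> omega

theorem invNum_yk (n k : ℕ) (hk : k ≤ n) :
    invNum (yk n k hk) = k.choose 2 + (n - k).choose 2 := by
  rw [invNum_eq_card_of_forall_lt_iff _ _ fun a b => yk_lt_yk_iff n k hk,
    card_filter_lt_and_iff (fun j : Fin n => (j : ℕ) < k), Fintype.card_fin,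
    Fin.card_filter_val_lt, min_eq_right hk]

theorem finRotate_mul_yk (n k : ℕ) (hk : k + 1 ≤ n) :
    finRotate n * yk n k (by omega) = yk n (k + 1) hk := by
  obtain ⟨m, rfl⟩ : ∃ m, n = m + 1 := ⟨n - 1, by omega⟩
  ext j
  simp only [Equiv.Perm.mul_apply, coe_finRotate, Fin.ext_iff, Fin.val_last, yk_apply_val]
  have := j.isLt
  split_ifs <;> omega

theorem Nat.choose_two_add_choose_two_succ (a : ℕ) : a.choose 2 + (a + 1).choose 2 = a ^ 2 := by
  induction a with
  | zero => rfl
  | succ a ih =>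
    have hsucc (b : ℕ) : (b + 1).choose 2 = b + b.choose 2 := by
      rw [Nat.choose_succ_succ', Nat.choose_one_right]
    rw [hsucc (a + 1), hsucc a] at *
    linarith

/-- **Hart–Rowley, proof of Proposition 2.8.** For the `n`-cycle `w = (1 2 ⋯ n)`
(zero-indexed: `finRotate n`), one has
`ℓ(w y_k) + ℓ(y_k) − ℓ(w) = 2k² − 2k(n−1) + n² − 3n + 2`. -/
theorem invNum_identity_for_yk (n k : ℕ) (hn : 2 ≤ n) (hk : k ≤ n - 1) :
    (invNum (finRotate n * yk n k (by omega)) : ℤ) + invNum (yk n k (by omega)) -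
        invNum (finRotate n) =
      2 * (k : ℤ) ^ 2 - 2 * k * ((n : ℤ) - 1) + (n : ℤ) ^ 2 - 3 * n + 2 := by
  obtain ⟨m, rfl⟩ : ∃ m, n = k + m + 1 := ⟨n - k - 1, by omega⟩
  rw [finRotate_mul_yk _ _ (by omega), invNum_yk, invNum_yk, invNum_finRotate_succ,
    show k + m + 1 - (k + 1) = m by omega, show k + m + 1 - k = m + 1 by omega]
  have hk2 := Nat.choose_two_add_choose_two_succ k
  have hm2 := Nat.choose_two_add_choose_two_succ m
  zify at hk2 hm2
  push_cast
  linear_combination hk2 + hm2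
end

section
/- For every natural number N there exist n ≥ 2 and a strongly real element w ∈ Sym(n) (namely the n-cycle (1 2 ⋯ n)) such that every decomposition w = xy with x² = 1 = y² satisfies ℓ(x) + ℓ(y) − ℓ(w) ≥ N; that is, elements of Coxeter groups can have arbitrarily large excess. -/
open Finset Equiv

section InvolutionFactors

variable {G : Type*} [Group G] {x y : G}

theorem mul_mul_eq_inv_mul_left (hx : x ^ 2 = 1) (hy : y ^ 2 = 1) :
    x * (x * y) = (x * y)⁻¹ * x := by
  rw [mul_inv_rev, inv_eq_of_mul_eq_one_right (pow_two y ▸ hy), inv_mul_cancel_right,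
    ← mul_assoc, ← pow_two, hx, one_mul]

theorem mul_mul_eq_inv_mul_right (hx : x ^ 2 = 1) (hy : y ^ 2 = 1) :
    y * (x * y) = (x * y)⁻¹ * y := by
  rw [mul_inv_rev, inv_eq_of_mul_eq_one_right (pow_two y ▸ hy),
    inv_eq_of_mul_eq_one_right (pow_two x ▸ hx), mul_assoc]

end InvolutionFactors

theorem Equiv.subLeft_sq {A : Type*} [AddCommGroup A] (a : A) : Equiv.subLeft a ^ 2 = 1 := by
  ext i
  simp [sq]

theorem choose_two_card_le_invNum {n : ℕ} (σ : Perm (Fin n)) {s : Finset (Fin n)}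
    (hσ : StrictAntiOn σ s) : (#s).choose 2 ≤ invNum σ := by
  rw [← card_product_filter_lt]
  refine card_le_card fun p hp => ?_
  simp only [mem_filter, mem_product] at hp
  simpa [invNum] using ⟨hp.2, hσ hp.1.1 hp.1.2 hp.2⟩

section Rotation

theorem finRotate_inversion_snd_eq_last {n : ℕ} {i j : Fin (n + 1)} (hij : i < j)
    (hrot : finRotate (n + 1) j < finRotate (n + 1) i) : j = Fin.last n := by
  by_contra hj
  have hj' : j < Fin.last n := (Fin.le_last j).lt_of_ne hj
  rw [finRotate_apply, finRotate_apply, Fin.lt_def, Fin.val_add_one_of_lt hj',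
    Fin.val_add_one_of_lt (hij.trans hj')] at hrot
  omega

theorem invNum_finRotate_le (n : ℕ) : invNum (finRotate n) ≤ n := by
  rcases n with _ | n
  · simp [invNum]
  refine (card_le_card_of_injOn Prod.fst (fun _ _ => mem_coe.2 (mem_univ _)) ?_).trans_eq
    (card_fin _)
  intro p hp q hq hpq
  simp only [coe_filter, mem_univ, true_and, Set.mem_ofPred_eq] at hp hq
  exact Prod.ext hpq ((finRotate_inversion_snd_eq_last hp.1 hp.2).trans
    (finRotate_inversion_snd_eq_last hq.1 hq.2).symm)

variable {n : ℕ} [NeZero n]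

theorem finRotate_eq_subLeft_mul_subLeft :
    finRotate n = Equiv.subLeft 0 * Equiv.subLeft (-1 : Fin n) := by
  ext i
  simp [finRotate_apply]

theorem eq_subLeft_of_mul_finRotate {x : Perm (Fin n)}
    (h : x * finRotate n = (finRotate n)⁻¹ * x) : x = Equiv.subLeft (x 0) := by
  obtain ⟨k, rfl⟩ := Nat.exists_eq_succ_of_ne_zero (NeZero.ne n)
  ext i
  induction i using Fin.induction with
  | zero => simp
  | succ i ih =>
    have step := congr($h i.castSucc)
    simp only [Perm.mul_apply, Perm.inv_def, finRotate_apply, finRotate_symm_apply,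
      Fin.coeSucc_eq_succ] at step
    rw [step, Fin.ext ih]
    simp [sub_sub, Fin.coeSucc_eq_succ]

theorem strictAntiOn_subLeft_Iic (a : Fin n) :
    StrictAntiOn (Equiv.subLeft a) (Iic a : Set (Fin n)) := by
  intro i hi j hj hij
  simp only [coe_Iic, Set.mem_Iic] at hi hj
  simp only [subLeft_apply, Fin.lt_def, Fin.coe_sub_iff_le.2 hi, Fin.coe_sub_iff_le.2 hj]
  omega

theorem strictAntiOn_subLeft_Ioi (a : Fin n) :
    StrictAntiOn (Equiv.subLeft a) (Ioi a : Set (Fin n)) := by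
  intro i hi j hj hij
  simp only [coe_Ioi, Set.mem_Ioi] at hi hj
  simp only [subLeft_apply, Fin.lt_def, Fin.coe_sub_iff_lt.2 hi, Fin.coe_sub_iff_lt.2 hj]
  omega

theorem choose_two_le_invNum_subLeft (a : Fin n) {m : ℕ} (hm : 2 * m ≤ n) :
    m.choose 2 ≤ invNum (Equiv.subLeft a) := by
  rcases le_or_gt m (a + 1) with h | h
  · calc m.choose 2 ≤ (#(Iic a)).choose 2 := Nat.choose_le_choose 2 (by rwa [Fin.card_Iic])
      _ ≤ _ := choose_two_card_le_invNum _ (strictAntiOn_subLeft_Iic a)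
  · calc m.choose 2 ≤ (#(Ioi a)).choose 2 := Nat.choose_le_choose 2 (by rw [Fin.card_Ioi]; omega)
      _ ≤ _ := choose_two_card_le_invNum _ (strictAntiOn_subLeft_Ioi a)

theorem choose_two_le_invNum_of_mul_finRotate {x : Perm (Fin n)}
    (h : x * finRotate n = (finRotate n)⁻¹ * x) {m : ℕ} (hm : 2 * m ≤ n) :
    m.choose 2 ≤ invNum x :=
  eq_subLeft_of_mul_finRotate h ▸ choose_two_le_invNum_subLeft (x 0) hm

end Rotation

/-- Elements of Coxeter groups can have arbitrarily large excess: for every `N` there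
are `n ≥ 2` and a strongly real element `w` of `Sym(n)` — namely the `n`-cycle
`(1 2 ⋯ n)`, zero-indexed `finRotate n` — such that every decomposition `w = x y` with
`x² = 1 = y²` satisfies `ℓ(x) + ℓ(y) − ℓ(w) ≥ N`. -/
theorem arbitrarily_large_excess (N : ℕ) :
    ∃ n : ℕ, 2 ≤ n ∧ ∃ w : Equiv.Perm (Fin n), w = finRotate n ∧
      (∃ x y : Equiv.Perm (Fin n), x ^ 2 = 1 ∧ y ^ 2 = 1 ∧ w = x * y) ∧
      ∀ x y : Equiv.Perm (Fin n), x ^ 2 = 1 → y ^ 2 = 1 → w = x * y →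
        (N : ℤ) ≤ (invNum x : ℤ) + (invNum y : ℤ) - (invNum w : ℤ) := by
  refine ⟨2 * (N + 3), by omega, finRotate _, rfl, ⟨_, _, Equiv.subLeft_sq _,
    Equiv.subLeft_sq _, finRotate_eq_subLeft_mul_subLeft⟩, ?_⟩
  intro x y hx hy hw
  have hxw : x * finRotate _ = (finRotate _)⁻¹ * x := hw ▸ mul_mul_eq_inv_mul_left hx hy
  have hyw : y * finRotate _ = (finRotate _)⁻¹ * y := hw ▸ mul_mul_eq_inv_mul_right hx hy
  have hx_len := choose_two_le_invNum_of_mul_finRotate hxw le_rfl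
  have hy_len := choose_two_le_invNum_of_mul_finRotate hyw le_rfl
  have hw_len := invNum_finRotate_le (2 * (N + 3))
  have hchoose : 3 * N + 6 ≤ 2 * (N + 3).choose 2 := by
    simp only [Nat.choose_succ_succ, Nat.choose_one_right, Nat.choose_zero_right]
    omega
  omega
end

section
/- Let N = {(λ₁, λ₂, λ₃) ∈ ℤ³ : λ₁ + λ₂ + λ₃ = 0}, let H = Sym(3) act on N by permuting coordinates, and let G = N ⋊ H be the corresponding semidirect product (so G is isomorphic to the affine Coxeter group of type Ã₂). Let λ be a nonzero integer, let g = (1 2) ∈ H, and let w ∈ G be the element with translation part (λ, λ, −2λ) and finite part g. Then w has infinite order and w cannot be written as a product of two elements x, y ∈ G with x² = 1 = y². In particular, not every element of an infinite Coxeter group is strongly real. -/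
/-! Translations form a torsion-free normal subgroup of `G`, so an element of finite order with
trivial finite part is trivial. Now `w²` is the nonzero translation by `(2λ, 2λ, −4λ)`, hence `w`
has infinite order. If `w = xy` with `x² = 1 = y²`, the finite parts of `x` and `y` are involutions
of `Sym(3)` with product `(1 2)`; as two distinct transpositions multiply to a `3`-cycle, one of
them is trivial, so that factor is `1` and the other one is `w`, which is not an involution. -/

/-- `N = {(λ₁, λ₂, λ₃) ∈ ℤ³ : λ₁ + λ₂ + λ₃ = 0}`, the root lattice of type `A₂`. -/
def rootLattice : AddSubgroup (Fin 3 → ℤ) where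
  carrier := {v | v 0 + v 1 + v 2 = 0}
  add_mem' := by
    intro a b ha hb
    simp only [Set.mem_setOf_eq, Pi.add_apply] at *
    omega
  zero_mem' := by simp
  neg_mem' := by
    intro a ha
    simp only [Set.mem_setOf_eq, Pi.neg_apply] at *
    omega

lemma sum_comp_perm (σ : Equiv.Perm (Fin 3)) (v : Fin 3 → ℤ) (hv : v 0 + v 1 + v 2 = 0) :
    v (σ 0) + v (σ 1) + v (σ 2) = 0 := by
  have h := Equiv.sum_comp σ v
  rw [Fin.sum_univ_three, Fin.sum_univ_three] at h
  omega

/-- The (multiplicative) group structure on `AddAut A` that Mathlib provided in the original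
version (`mul g h := h.trans g`); current Mathlib only gives `AddAut A` an additive group. -/
instance addAutGroupOld (A : Type*) [Add A] : Group (AddAut A) where
  mul g h := AddEquiv.trans h g
  one := AddEquiv.refl _
  inv := AddEquiv.symm
  mul_assoc _ _ _ := rfl
  one_mul _ := rfl
  mul_one _ := rfl
  inv_mul_cancel := AddEquiv.self_trans_symm

@[simp]
theorem addAutGroupOld_one_apply (A : Type*) [Add A] (a : A) : (1 : AddAut A) a = a := rfl

@[simp]
theorem addAutGroupOld_mul_apply (A : Type*) [Add A] (e₁ e₂ : AddAut A) (a : A) :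
    (e₁ * e₂) a = e₁ (e₂ a) := rfl

/-- `Sym(3)` acts on the lattice `N` by permuting the three coordinates. -/
def permAddAut : Equiv.Perm (Fin 3) →* AddAut ↥rootLattice where
  toFun σ :=
    { toFun := fun v => ⟨fun i => v.1 (σ⁻¹ i), sum_comp_perm σ⁻¹ v.1 v.2⟩
      invFun := fun v => ⟨fun i => v.1 (σ i), sum_comp_perm σ v.1 v.2⟩
      left_inv := fun v => by ext i; simp
      right_inv := fun v => by ext i; simp
      map_add' := fun v w => by ext i; simp [AddSubgroup.coe_add] }
  map_one' := by ext v i; simp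
  map_mul' := fun σ τ => by ext v i; simp [Equiv.Perm.mul_apply]

/-- The action of `Sym(3)` on `N` (written multiplicatively), used to form `N ⋊ Sym(3)`. -/
def permMulAut : Equiv.Perm (Fin 3) →* MulAut (Multiplicative ↥rootLattice) where
  toFun σ := AddEquiv.toMultiplicative (permAddAut σ)
  map_one' := by show AddEquiv.toMultiplicative (permAddAut 1) = 1; rw [map_one]; rfl
  map_mul' := fun σ τ => rfl

/-- `G = N ⋊ Sym(3)`, isomorphic to the affine Coxeter group of type `Ã₂`. -/
abbrev AffineA2 := Multiplicative ↥rootLattice ⋊[permMulAut] Equiv.Perm (Fin 3)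

/-- The element `w` of `G` with translation part `(a, a, −2a)` and finite part `(1 2)`. -/
def wElt (a : ℤ) : AffineA2 :=
  ⟨Multiplicative.ofAdd ⟨![a, a, -2 * a], by
      simp [rootLattice, Set.mem_setOf_eq]
      ring⟩,
    Equiv.swap 0 1⟩

namespace SemidirectProduct

variable {N G : Type*} [Group N] [Group G] {φ : G →* MulAut N}

theorem right_pow (z : N ⋊[φ] G) (n : ℕ) : (z ^ n).right = z.right ^ n :=
  map_pow rightHom z n

theorem eq_one_of_isOfFinOrder_of_right_eq_one [IsMulTorsionFree N] {z : N ⋊[φ] G}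
    (hz : IsOfFinOrder z) (hright : z.right = 1) : z = 1 := by
  have hinl : inl z.left = z := by ext <;> simp [hright]
  have hleft : IsOfFinOrder z.left := (inl_injective.isOfFinOrder_iff (f := inl)).1 (hinl ▸ hz)
  rw [← hinl, hleft.eq_one', map_one]

end SemidirectProduct

open Equiv SemidirectProduct

theorem Equiv.Perm.eq_one_or_eq_one_of_sq_eq_one_of_mul_eq_swap {σ τ : Perm (Fin 3)} {i j : Fin 3}
    (hij : i ≠ j) (hσ : σ ^ 2 = 1) (hτ : τ ^ 2 = 1) (hστ : σ * τ = swap i j) : σ = 1 ∨ τ = 1 := by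
  have key : ∀ i j : Fin 3, i ≠ j → ∀ σ : Perm (Fin 3), σ ^ 2 = 1 →
      ∀ τ : Perm (Fin 3), τ ^ 2 = 1 → σ * τ = swap i j → σ = 1 ∨ τ = 1 := by
    decide
  exact key i j hij σ hσ τ hτ hστ

theorem wElt_right (a : ℤ) : (wElt a).right = swap 0 1 := rfl

theorem wElt_sq_ne_one {a : ℤ} (ha : a ≠ 0) : wElt a ^ 2 ≠ 1 := by
  intro h
  have h0 := congrArg (fun z : AffineA2 => (Multiplicative.toAdd z.left).1 0) h
  rw [sq] at h0
  -- `(1 2)` fixes `(a, a, -2a)`, so the translation part of `w²` is `(2a, 2a, -4a)`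
  change a + a = 0 at h0
  omega

theorem not_isOfFinOrder_wElt {a : ℤ} (ha : a ≠ 0) : ¬ IsOfFinOrder (wElt a) := fun h =>
  wElt_sq_ne_one ha <| eq_one_of_isOfFinOrder_of_right_eq_one h.pow <| by
    rw [right_pow, wElt_right, sq, swap_mul_self]

/-- **Hart–Rowley, Introduction.** In the infinite Coxeter group `G = N ⋊ Sym(3)` of type
`Ã₂`, the element `w` with translation part `(a, a, −2a)` (`a ≠ 0`) and finite part
`(1 2)` has infinite order and is not a product of two elements of order dividing `2`;
in particular, not every element of an infinite Coxeter group is strongly real. -/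
theorem not_strongly_real_in_affineA2 (a : ℤ) (ha : a ≠ 0) :
    ¬ IsOfFinOrder (wElt a) ∧
      ¬ ∃ x y : AffineA2, x ^ 2 = 1 ∧ y ^ 2 = 1 ∧ wElt a = x * y := by
  refine ⟨not_isOfFinOrder_wElt ha, ?_⟩
  rintro ⟨x, y, hx, hy, hw⟩
  have eq_one_of_right_eq_one {z : AffineA2} (hz : z ^ 2 = 1) (hright : z.right = 1) : z = 1 :=
    eq_one_of_isOfFinOrder_of_right_eq_one (isOfFinOrder_iff_pow_eq_one.2 ⟨2, two_pos, hz⟩) hright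
  have hxy : x.right * y.right = swap 0 1 := by rw [← mul_right, ← hw, wElt_right]
  rcases Perm.eq_one_or_eq_one_of_sq_eq_one_of_mul_eq_swap (by decide)
      (by rw [← right_pow, hx, one_right]) (by rw [← right_pow, hy, one_right]) hxy with hx1 | hy1
  · rw [eq_one_of_right_eq_one hx hx1, one_mul] at hw
    exact wElt_sq_ne_one ha (hw ▸ hy)
  · rw [eq_one_of_right_eq_one hy hy1, mul_one] at hw
    exact wElt_sq_ne_one ha (hw ▸ hx)
end

section
/- Let (W,S) be a Coxeter system with length function ℓ, let J ⊆ S, and let W_J be the standard parabolic subgroup generated by J. Suppose z ∈ W is an involution of minimal length in its W_J-conjugacy class, i.e. ℓ(g z g⁻¹) ≥ ℓ(z) for all g ∈ W_J. If r ∈ J satisfies ℓ(zr) < ℓ(z), then r z r = z (so z commutes with r). -/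
/-!
Tits' sign representation: `W` acts on `W × ZMod 2`, with `s i` conjugating the first
coordinate and flipping the sign exactly at `s i`. Hence the parity of the number of
occurrences of `t` in the right inversion sequence of a word depends only on the element the
word represents, which yields the exchange condition for simple reflections.

For the theorem, `z = z⁻¹` makes `r` both a left and a right descent of `z`. Write
`z = r · ν` with `ν` reduced and delete the letter supplied by the exchange condition for the
right descent `r`: if it is the leading `r`, then `z r = ν = r z`; otherwise `r z r` is
represented by `ν` with a letter removed, so `ℓ(r z r) = ℓ(z) - 2`, against minimality.
-/

namespace CoxeterSystem

open scoped Classical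

variable {B W : Type*} [Group W] {M : CoxeterMatrix B} (cs : CoxeterSystem M W)

local prefix:100 "s" => cs.simple
local prefix:100 "π" => cs.wordProd
local prefix:100 "ℓ" => cs.length

noncomputable def reflectionFlip (i : B) : Equiv.Perm (W × ZMod 2) :=
  Function.Involutive.toPerm (fun x => (s i * x.1 * s i, x.2 + if x.1 = s i then 1 else 0))
    (by
      rintro ⟨t, e⟩
      by_cases ht : t = s i
      · subst ht
        simp [add_assoc, CharTwo.add_self_eq_zero]
      · simp [mul_assoc, mul_eq_one_iff_eq_inv, ht])

theorem reflectionFlip_apply (i : B) (x : W × ZMod 2) :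
    cs.reflectionFlip i x = (s i * x.1 * s i, x.2 + if x.1 = s i then 1 else 0) := rfl

theorem prod_map_reflectionFlip_apply (ω : List B) (x : W × ZMod 2) :
    (ω.map cs.reflectionFlip).prod x =
      (π ω * x.1 * (π ω)⁻¹, x.2 + ((cs.rightInvSeq ω).count x.1 : ZMod 2)) := by
  induction ω generalizing x with
  | nil => simp
  | cons i ω ih =>
    obtain ⟨t, e⟩ := x
    have hconj : (π ω)⁻¹ * s i * π ω = t ↔ π ω * t * (π ω)⁻¹ = s i := by
      constructor <;> intro h <;> rw [← h] <;> group
    simp only [List.map_cons, List.prod_cons, Equiv.Perm.mul_apply, ih, reflectionFlip_apply,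
      rightInvSeq, wordProd_cons, List.count_cons, beq_iff_eq, hconj]
    ext
    · simp [mul_assoc]
    · split_ifs <;> push_cast <;> ring

theorem reverse_rightInvSeq_alternatingWord (i i' : B) (n : ℕ) :
    (cs.rightInvSeq (alternatingWord i i' n)).reverse =
      (List.range n).map fun k => s i' * (s i * s i') ^ k := by
  induction n generalizing i i' with
  | zero => simp [alternatingWord]
  | succ n ih =>
    rw [alternatingWord_succ, rightInvSeq_concat, List.concat_eq_append, List.reverse_append,
      ← List.map_reverse, ih, List.range_succ_eq_map]
    simp only [List.reverse_singleton, List.map_cons, List.map_map, pow_zero, mul_one,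
      List.singleton_append]
    congr 2
    funext k
    simp [MulAut.conj_apply, cs.inv_simple, ← mul_assoc, mul_pow_mul, pow_succ]

theorem even_count_rightInvSeq_alternatingWord (i i' : B) (t : W) :
    Even ((cs.rightInvSeq (alternatingWord i i' (2 * M i i'))).count t) := by
  have hperiodic : (fun k => s i' * (s i * s i') ^ k) ∘ (M i i' + ·) =
      fun k => s i' * (s i * s i') ^ k := by
    funext k
    simp [pow_add, cs.simple_mul_simple_pow]
  rw [← List.count_reverse, reverse_rightInvSeq_alternatingWord, two_mul, List.range_add,
    List.map_append, List.map_map, hperiodic, List.count_append]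
  exact ⟨_, rfl⟩

theorem prod_map_alternatingWord_two_mul {G : Type*} [Monoid G] (f : B → G) (i i' : B)
    (m : ℕ) : ((alternatingWord i i' (2 * m)).map f).prod = (f i * f i') ^ m := by
  induction m with
  | zero => simp [alternatingWord]
  | succ m ih =>
    rw [Nat.mul_succ, alternatingWord_succ', alternatingWord_succ', if_neg (by simp),
      if_pos (by simp), List.map_cons, List.map_cons, List.prod_cons, List.prod_cons, ih,
      pow_succ', mul_assoc]

theorem isLiftable_reflectionFlip : M.IsLiftable cs.reflectionFlip := by
  intro i i'
  ext1 x
  have hπ : π (alternatingWord i i' (2 * M i i')) = 1 := by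
    rw [wordProd, prod_map_alternatingWord_two_mul, cs.simple_mul_simple_pow]
  rw [← prod_map_alternatingWord_two_mul, prod_map_reflectionFlip_apply, hπ,
    (cs.even_count_rightInvSeq_alternatingWord i i' x.1).natCast_zmod_two]
  simp

noncomputable def flipRepresentation : W →* Equiv.Perm (W × ZMod 2) :=
  cs.lift ⟨cs.reflectionFlip, cs.isLiftable_reflectionFlip⟩

theorem flipRepresentation_wordProd (ω : List B) :
    cs.flipRepresentation (π ω) = (ω.map cs.reflectionFlip).prod := by
  rw [wordProd, map_list_prod, List.map_map]
  congr 2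
  funext i
  exact cs.lift_apply_simple _ i

theorem count_rightInvSeq_cast_eq_of_wordProd_eq {ω ω' : List B} (h : π ω = π ω') (t : W) :
    ((cs.rightInvSeq ω).count t : ZMod 2) = (cs.rightInvSeq ω').count t := by
  simpa [flipRepresentation_wordProd, prod_map_reflectionFlip_apply] using
    congrArg (fun w => (cs.flipRepresentation w (t, 0)).2) h

/-- Compare `ω` with a reduced word ending in `i`, whose right inversion sequence contains
`s i` exactly once. -/
theorem simple_mem_rightInvSeq_of_isRightDescent {ω : List B} {i : B}
    (h : cs.IsRightDescent (π ω) i) : s i ∈ cs.rightInvSeq ω := by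
  obtain ⟨ν, hν, hνω⟩ := cs.exists_isReduced (π ω * s i)
  have hprod : π (ν.concat i) = π ω := by
    rw [wordProd_concat, ← hνω, cs.simple_mul_simple_cancel_right]
  have hreduced : cs.IsReduced (ν.concat i) := by
    have hlen := cs.isRightDescent_iff.mp h
    rw [hνω, hν.eq] at hlen
    simp only [IsReduced, hprod, List.length_concat, hlen]
  have hcount : (cs.rightInvSeq (ν.concat i)).count (s i) = 1 :=
    List.count_eq_one_of_mem hreduced.nodup_rightInvSeq (by rw [rightInvSeq_concat]; simp)
  have hodd := cs.count_rightInvSeq_cast_eq_of_wordProd_eq hprod (s i)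
  rw [hcount, Nat.cast_one, eq_comm, ZMod.natCast_eq_one_iff_odd] at hodd
  exact List.count_pos_iff.mp hodd.pos

theorem exists_mul_simple_eq_wordProd_eraseIdx {ω : List B} {i : B}
    (h : cs.IsRightDescent (π ω) i) :
    ∃ j < ω.length, π ω * s i = π (ω.eraseIdx j) := by
  obtain ⟨j, hj, hget⟩ :=
    List.mem_iff_getElem.mp (cs.simple_mem_rightInvSeq_of_isRightDescent h)
  refine ⟨j, by simpa using hj, ?_⟩
  rw [← cs.wordProd_mul_getD_rightInvSeq, List.getD_eq_getElem _ _ hj, hget]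

theorem simple_mul_mul_simple_eq_or_length_add_two {w : W} {i : B}
    (hl : cs.IsLeftDescent w i) (hr : cs.IsRightDescent w i) :
    s i * w * s i = w ∨ ℓ (s i * w * s i) + 2 = ℓ w := by
  obtain ⟨ν, hν, hνw⟩ := cs.exists_isReduced (s i * w)
  have hw : π (i :: ν) = w := by rw [wordProd_cons, ← hνw, cs.simple_mul_simple_cancel_left]
  have hlen : ν.length + 1 = ℓ w := by rw [← hν.eq, ← hνw, cs.isLeftDescent_iff.mp hl]
  obtain ⟨j, hj, hdel⟩ := cs.exists_mul_simple_eq_wordProd_eraseIdx (hw ▸ hr)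
  rw [hw] at hdel
  rcases j with _ | k
  · left
    rw [mul_assoc, hdel, List.eraseIdx_cons_zero, ← hνw, cs.simple_mul_simple_cancel_left]
  · right
    have hk : k < ν.length := by simpa using hj
    rw [List.eraseIdx_cons_succ, wordProd_cons] at hdel
    have hconj : s i * w * s i = π (ν.eraseIdx k) := by
      rw [mul_assoc, hdel, cs.simple_mul_simple_cancel_left]
    have hupper := cs.length_wordProd_le (ν.eraseIdx k)
    have hlower := cs.length_le_length_mul_add_left (s i) (w * s i)
    rw [List.length_eraseIdx_of_lt hk, ← hconj] at hupper
    rw [← mul_assoc, cs.length_simple] at hlower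
    have hrlen := cs.isRightDescent_iff.mp hr
    omega

end CoxeterSystem

theorem simple_commutes_of_minimal_involution_general {B W : Type*} [Group W]
    {M : CoxeterMatrix B} (cs : CoxeterSystem M W) (J : Set B) (z : W)
    (hz : z ^ 2 = 1)
    (hmin : ∀ g ∈ Subgroup.closure (cs.simple '' J),
      cs.length z ≤ cs.length (g * z * g⁻¹))
    (i : B) (hi : i ∈ J)
    (hlt : cs.length (z * cs.simple i) < cs.length z) :
    cs.simple i * z * cs.simple i = z := by
  have hleft : cs.IsLeftDescent z i := by
    rwa [← cs.isRightDescent_inv_iff, inv_eq_of_mul_eq_one_right (by rw [← sq, hz])]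
  have hconj := hmin (cs.simple i) (Subgroup.subset_closure (Set.mem_image_of_mem _ hi))
  rw [cs.inv_simple] at hconj
  rcases cs.simple_mul_mul_simple_eq_or_length_add_two hleft hlt with h | h
  · exact h
  · omega

/-- **Hart–Rowley, proof of Theorem 1.1.** Let `(W, S)` be a Coxeter system, `J ⊆ S`
(given by a subset `J` of the index set, with `W_J` the standard parabolic subgroup
generated by the corresponding simple reflections). If `z` is an involution of minimal
length in its `W_J`-conjugacy class, and `r ∈ J` satisfies `ℓ(z r) < ℓ(z)`, then
`r z r = z`. -/
theorem simple_commutes_of_minimal_involution {B W : Type*} [Group W]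
    {M : CoxeterMatrix B} (cs : CoxeterSystem M W) (J : Set B) (z : W)
    (hz : z ^ 2 = 1) (hz1 : z ≠ 1)
    (hmin : ∀ g ∈ Subgroup.closure (cs.simple '' J),
      cs.length z ≤ cs.length (g * z * g⁻¹))
    (i : B) (hi : i ∈ J)
    (hlt : cs.length (z * cs.simple i) < cs.length z) :
    cs.simple i * z * cs.simple i = z :=
  simple_commutes_of_minimal_involution_general cs J z hz hmin i hi hlt
end
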